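/- Let (x,y,z) ∈ 𝓗 with x, z ≥ 0, 0 ≤ y ≤ x, and x < √z. Define the word S_z over X by: S_z = a^{n+1} b^{n+1} if z = (n+1)² for some n ∈ ℕ; S_z = a^k b a^{n−k} b^n if z = n² + k for some n ∈ ℕ and 1 ≤ k ≤ n; and S_z = a^k b a^{n+1−k} b^n if z = n² + n + k for some n ∈ ℕ and 1 ≤ k ≤ n. Let (x', y', z) be the element of 𝓗 represented by S_z. Then b^{y−y'} S_z a^{x−x'} is a geodesic representative of (x,y,z). -/

import Mathlib

open scoped commutatorElement

/-- The two generators `a, b` of the discrete Heisenberg group. -/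
inductive HGen : Type
  | a | b
deriving DecidableEq

/-- Relators of the discrete Heisenberg group `⟨a,b ∣ [a,[a,b]] = [b,[a,b]] = 1⟩`. -/
def Hrels : Set (FreeGroup HGen) :=
  { ⁅FreeGroup.of HGen.a, ⁅FreeGroup.of HGen.a, FreeGroup.of HGen.b⁆⁆,
    ⁅FreeGroup.of HGen.b, ⁅FreeGroup.of HGen.a, FreeGroup.of HGen.b⁆⁆ }

/-- The discrete Heisenberg group `𝓗`. -/
abbrev Heis : Type := PresentedGroup Hrels

/-- The generator `a` of `𝓗`. -/
def Ha : Heis := PresentedGroup.of HGen.a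

/-- The generator `b` of `𝓗`. -/
def Hb : Heis := PresentedGroup.of HGen.b

/-- The four letters of the alphabet `X = {a, a⁻¹, b, b⁻¹}`. -/
inductive XLetter : Type
  | a | A | b | B
deriving DecidableEq

/-- The element of `𝓗` represented by a letter of `X`. -/
def XLetter.toH : XLetter → Heis
  | .a => Ha
  | .A => Ha⁻¹
  | .b => Hb
  | .B => Hb⁻¹

/-- The element of `𝓗` represented by a word over `X`. -/
def evalX (w : List XLetter) : Heis := (w.map XLetter.toH).prod

/-- The word `a^k` over `X`, for `k ∈ ℤ`. -/
def apow (k : ℤ) : List XLetter :=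
  if 0 ≤ k then List.replicate k.toNat XLetter.a else List.replicate (-k).toNat XLetter.A

/-- The word `b^k` over `X`, for `k ∈ ℤ`. -/
def bpow (k : ℤ) : List XLetter :=
  if 0 ≤ k then List.replicate k.toNat XLetter.b else List.replicate (-k).toNat XLetter.B

/-- The element `(x,y,z)` of `𝓗`, i.e. the element with normal form `[a,b]^z b^y a^x`. -/
def hElt (x y z : ℤ) : Heis := ⁅Ha, Hb⁆ ^ z * Hb ^ y * Ha ^ x

/-- The word length `ℓ_X(g)` of `g ∈ 𝓗` with respect to `X`. -/
noncomputable def lenX (g : Heis) : ℕ :=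
  sInf { n | ∃ w : List XLetter, evalX w = g ∧ w.length = n }

/-- A word over `X` is geodesic if its length equals the word length of the
element it represents. -/
def IsGeodesicX (w : List XLetter) : Prop := w.length = lenX (evalX w)

/-!
Map `𝓗` onto its coordinate group `ℤ³`. The `z`-coordinate of a word is the signed area swept
by its path; induction along the word bounds it by `areaBound`, which for an endpoint with
`x, y ≥ 0` reads `z ≤ u v`, where `u` and `v` count the letters `a` and `b`. Such a word has
length `2 (u + v) - x - y` and `(u + v)² ≥ 4 z`. The word `b^{y-y'} S_z a^{x-x'}` has length
`2 (x' + y') - x - y`, and `(x' + y' - 1)² < 4 z` forces `u + v ≥ x' + y'` for every other word.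
-/

/-- Coordinates `(x, y, z)` of `[a,b]^z b^y a^x`; the product law comes from
`a^x b^y' = [a,b]^(x y') b^y' a^x`. -/
@[ext] structure H3 where
  x : ℤ
  y : ℤ
  z : ℤ

namespace H3

instance : Mul H3 := ⟨fun g h => ⟨g.x + h.x, g.y + h.y, g.z + h.z + g.x * h.y⟩⟩
instance : One H3 := ⟨⟨0, 0, 0⟩⟩
instance : Inv H3 := ⟨fun g => ⟨-g.x, -g.y, g.x * g.y - g.z⟩⟩

@[simp] lemma mul_def (g h : H3) : g * h = ⟨g.x + h.x, g.y + h.y, g.z + h.z + g.x * h.y⟩ := rfl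
@[simp] lemma one_def : (1 : H3) = ⟨0, 0, 0⟩ := rfl
@[simp] lemma inv_def (g : H3) : g⁻¹ = ⟨-g.x, -g.y, g.x * g.y - g.z⟩ := rfl

instance : Group H3 where
  mul_assoc a b c := by ext <;> simp <;> ring
  one_mul a := by ext <;> simp
  mul_one a := by ext <;> simp
  inv_mul_cancel a := by ext <;> simp

lemma zpow_eq_of_x_mul_y_eq_zero (g : H3) (hg : g.x * g.y = 0) (n : ℤ) :
    g ^ n = ⟨n * g.x, n * g.y, n * g.z⟩ := by
  induction n using Int.induction_on with
  | zero => simp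
  | succ k ih => rw [zpow_add_one, ih]; ext <;> simp <;> grind
  | pred k ih => rw [zpow_sub_one, ih]; ext <;> simp <;> grind

end H3

lemma hrels_lift_eq_one (r : FreeGroup HGen) (hr : r ∈ Hrels) :
    FreeGroup.lift (fun | .a => (⟨1, 0, 0⟩ : H3) | .b => ⟨0, 1, 0⟩) r = 1 := by
  rcases hr with rfl | rfl <;> simp [commutatorElement_def]

def toH3 : Heis →* H3 := PresentedGroup.toGroup hrels_lift_eq_one

@[simp] lemma toH3_Ha : toH3 Ha = ⟨1, 0, 0⟩ := PresentedGroup.toGroup.of hrels_lift_eq_one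
@[simp] lemma toH3_Hb : toH3 Hb = ⟨0, 1, 0⟩ := PresentedGroup.toGroup.of hrels_lift_eq_one

lemma toH3_hElt (x y z : ℤ) : toH3 (hElt x y z) = ⟨x, y, z⟩ := by
  have hc : toH3 ⁅Ha, Hb⁆ = ⟨0, 0, 1⟩ := by simp [commutatorElement_def]
  simp only [hElt, map_mul, map_zpow, hc, toH3_Ha, toH3_Hb]
  rw [H3.zpow_eq_of_x_mul_y_eq_zero _ (by simp), H3.zpow_eq_of_x_mul_y_eq_zero _ (by simp),
    H3.zpow_eq_of_x_mul_y_eq_zero _ (by simp)]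
  ext <;> simp

lemma commute_Hb_commutator : Commute Hb ⁅Ha, Hb⁆ := by
  rw [← commutatorElement_eq_one_iff_commute]
  exact PresentedGroup.one_of_mem (Set.mem_insert_of_mem _ rfl)

lemma zpow_mul_hElt_mul_zpow (s t x y z : ℤ) :
    Hb ^ s * hElt x y z * Ha ^ t = hElt (x + t) (s + y) z := by
  simp only [hElt, zpow_add, ← mul_assoc, (commute_Hb_commutator.zpow_zpow s z).eq]

lemma evalX_append (u v : List XLetter) : evalX (u ++ v) = evalX u * evalX v := by
  simp [evalX]

lemma evalX_cons (l : XLetter) (w : List XLetter) : evalX (l :: w) = l.toH * evalX w := by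
  simp [evalX]

lemma evalX_apow (k : ℤ) : evalX (apow k) = Ha ^ k := by
  unfold apow
  split_ifs with h
  · simp [evalX, XLetter.toH, ← zpow_natCast, Int.toNat_of_nonneg h]
  · simp [evalX, XLetter.toH, ← zpow_natCast, Int.toNat_of_nonneg (by omega : 0 ≤ -k)]

lemma evalX_bpow (k : ℤ) : evalX (bpow k) = Hb ^ k := by
  unfold bpow
  split_ifs with h
  · simp [evalX, XLetter.toH, ← zpow_natCast, Int.toNat_of_nonneg h]
  · simp [evalX, XLetter.toH, ← zpow_natCast, Int.toNat_of_nonneg (by omega : 0 ≤ -k)]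

@[simp] lemma length_apow (k : ℤ) : (apow k).length = k.natAbs := by
  unfold apow; split_ifs <;> simp <;> omega

@[simp] lemma length_bpow (k : ℤ) : (bpow k).length = k.natAbs := by
  unfold bpow; split_ifs <;> simp <;> omega

@[simp] lemma toH3_evalX_apow (k : ℤ) : toH3 (evalX (apow k)) = ⟨k, 0, 0⟩ := by
  rw [evalX_apow, map_zpow, toH3_Ha, H3.zpow_eq_of_x_mul_y_eq_zero _ (by simp)]
  simp

@[simp] lemma toH3_evalX_bpow (k : ℤ) : toH3 (evalX (bpow k)) = ⟨0, k, 0⟩ := by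
  rw [evalX_bpow, map_zpow, toH3_Hb, H3.zpow_eq_of_x_mul_y_eq_zero _ (by simp)]
  simp

lemma toH3_evalX_x (w : List XLetter) :
    (toH3 (evalX w)).x = w.count .a - w.count .A := by
  induction w with
  | nil => rfl
  | cons l w ih => cases l <;> simp [evalX_cons, XLetter.toH, ih] <;> omega

lemma toH3_evalX_y (w : List XLetter) :
    (toH3 (evalX w)).y = w.count .b - w.count .B := by
  induction w with
  | nil => rfl
  | cons l w ih => cases l <;> simp [evalX_cons, XLetter.toH, ih] <;> omega

lemma length_eq_count_add (w : List XLetter) :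
    w.length = w.count .a + w.count .A + w.count .b + w.count .B := by
  induction w with
  | nil => rfl
  | cons l w ih => cases l <;> simp [ih] <;> omega

/-- Bound on the `z`-coordinate of a word with `u, u', v, v'` letters `a, a⁻¹, b, b⁻¹`, which
ends at `x = u - u'`, `y = v - v'`. For `x, y ≥ 0` it is `u v`; the correction `min 0 (x y)`
is what makes it inductive. -/
def areaBound (u u' v v' : ℤ) : ℤ := max u u' * max v v' + min 0 ((u - u') * (v - v'))

lemma areaBound_swap (u u' v v' : ℤ) : areaBound u' u v' v = areaBound u u' v v' := by
  simp only [areaBound, max_comm u', max_comm v']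
  ring_nf

lemma areaBound_le_succ (u u' v v' : ℤ) (hv : 0 ≤ v) (hv' : 0 ≤ v') :
    areaBound u u' v v' ≤ areaBound (u + 1) u' v v' := by
  have hM := le_max_left v v'
  have hM' := le_max_right v v'
  have hp : (u + 1 - u') * (v - v') = (u - u') * (v - v') + (v - v') := by ring
  unfold areaBound
  rw [hp]
  rcases lt_or_ge u u' with hu | hu
  · rw [max_eq_right hu.le, max_eq_right (show u + 1 ≤ u' by omega)]
    rcases le_total v' v with hw | hw <;>
      rcases min_cases 0 ((u - u') * (v - v')) with h | h <;>
      rcases min_cases 0 ((u - u') * (v - v') + (v - v')) with h' | h' <;> nlinarith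
  · rw [max_eq_left hu, max_eq_left (show u' ≤ u + 1 by omega)]
    rcases min_cases 0 ((u - u') * (v - v')) with h | h <;>
      rcases min_cases 0 ((u - u') * (v - v') + (v - v')) with h' | h' <;> nlinarith

lemma areaBound_add_sub_le_succ (u u' v v' : ℤ) (hu : 0 ≤ u) (hu' : 0 ≤ u') :
    areaBound u u' v v' + (u - u') ≤ areaBound u u' (v + 1) v' := by
  have hM := le_max_left u u'
  have hM' := le_max_right u u'
  have hp : (u - u') * (v + 1 - v') = (u - u') * (v - v') + (u - u') := by ring
  unfold areaBound
  rw [hp]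
  rcases lt_or_ge v v' with hv | hv
  · rw [max_eq_right hv.le, max_eq_right (show v + 1 ≤ v' by omega)]
    rcases le_total u' u with hw | hw <;>
      rcases min_cases 0 ((u - u') * (v - v')) with h | h <;>
      rcases min_cases 0 ((u - u') * (v - v') + (u - u')) with h' | h' <;> nlinarith
  · rw [max_eq_left hv, max_eq_left (show v' ≤ v + 1 by omega)]
    rcases min_cases 0 ((u - u') * (v - v')) with h | h <;>
      rcases min_cases 0 ((u - u') * (v - v') + (u - u')) with h' | h' <;> nlinarith

lemma toH3_evalX_z_le (w : List XLetter) :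
    (toH3 (evalX w)).z ≤ areaBound (w.count .a) (w.count .A) (w.count .b) (w.count .B) := by
  induction w using List.reverseRecOn with
  | nil => simp [evalX, areaBound]
  | append_singleton w l ih =>
    have hx := toH3_evalX_x w
    have hstep : toH3 (evalX (w ++ [l])) = toH3 (evalX w) * toH3 l.toH := by
      rw [evalX_append, map_mul, evalX_cons]
      simp [evalX]
    have hcount (m : XLetter) :
        ((w ++ [l]).count m : ℤ) = w.count m + if l = m then 1 else 0 := by
      split_ifs with h <;> simp [List.count_append, h]
    simp only [hstep, hcount]
    cases l <;>
      simp only [XLetter.toH, map_inv, toH3_Ha, toH3_Hb, H3.inv_def, H3.mul_def, neg_zero, mul_zero,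
        mul_one, mul_neg, sub_self, add_zero, Int.reduceNeg, reduceCtorEq, ↓reduceIte]
    · exact ih.trans (areaBound_le_succ _ _ _ _ (by positivity) (by positivity))
    · rw [← areaBound_swap] at ih ⊢
      exact ih.trans (areaBound_le_succ _ _ _ _ (by positivity) (by positivity))
    · linarith [areaBound_add_sub_le_succ (w.count .a) (w.count .A) (w.count .b) (w.count .B)
        (by positivity) (by positivity)]
    · rw [← areaBound_swap] at ih ⊢
      linarith [areaBound_add_sub_le_succ (w.count .A) (w.count .a) (w.count .B) (w.count .b)
        (by positivity) (by positivity)]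

lemma length_ge_of_sq_lt {x y z m : ℤ} (hx : 0 ≤ x) (hy : 0 ≤ y) (hm : m ^ 2 < 4 * z)
    {w : List XLetter} (hw : evalX w = hElt x y z) : 2 * m + 2 - x - y ≤ w.length := by
  have hxyz : toH3 (evalX w) = ⟨x, y, z⟩ := by rw [hw, toH3_hElt]
  have hwx := toH3_evalX_x w
  have hwy := toH3_evalX_y w
  have hwz := toH3_evalX_z_le w
  simp only [hxyz] at hwx hwy hwz
  set u : ℤ := (w.count .a : ℤ)
  set v : ℤ := (w.count .b : ℤ)
  have hzuv : z ≤ u * v := by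
    rwa [areaBound, max_eq_left (by omega), max_eq_left (by omega), ← hwx, ← hwy,
      min_eq_left (by positivity), add_zero] at hwz
  have huv : m < u + v := by nlinarith [sq_nonneg (u - v)]
  rw [length_eq_count_add]
  push_cast
  omega

lemma isGeodesicX_of_forall_length_le {w : List XLetter}
    (h : ∀ w' : List XLetter, evalX w' = evalX w → w.length ≤ w'.length) : IsGeodesicX w := by
  have hw : w.length ∈ { n | ∃ w' : List XLetter, evalX w' = evalX w ∧ w'.length = n } :=
    ⟨w, rfl, rfl⟩
  refine le_antisymm (le_csInf ⟨_, hw⟩ ?_) (Nat.sInf_le hw)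
  rintro _ ⟨w', hw', rfl⟩
  exact h w' hw'

theorem isGeodesicX_bpow_append_append_apow {x y z x' y' : ℤ} {S : List XLetter}
    (hx : 0 ≤ x) (hy : 0 ≤ y) (hS : evalX S = hElt x' y' z) (hlen : (S.length : ℤ) = x' + y')
    (hxx' : x ≤ x') (hyy' : y ≤ y') (hz : (x' + y' - 1) ^ 2 < 4 * z) :
    evalX (bpow (y - y') ++ S ++ apow (x - x')) = hElt x y z ∧
    IsGeodesicX (bpow (y - y') ++ S ++ apow (x - x')) := by
  have heval : evalX (bpow (y - y') ++ S ++ apow (x - x')) = hElt x y z := by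
    rw [evalX_append, evalX_append, evalX_bpow, evalX_apow, hS, zpow_mul_hElt_mul_zpow]
    congr 1 <;> ring
  refine ⟨heval, isGeodesicX_of_forall_length_le fun w hw => ?_⟩
  have := length_ge_of_sq_lt hx hy hz (hw.trans heval)
  simp only [List.length_append, length_apow, length_bpow]
  omega

theorem geodesic_case_I1_general (x y z : ℤ) (hx : 0 ≤ x) (hy0 : 0 ≤ y) (hyx : y ≤ x)
    (hsqrt : (x : ℝ) < Real.sqrt z)
    (Sz : List XLetter)
    (hSz : (∃ n : ℕ, z = ((n : ℤ) + 1) ^ 2 ∧ Sz = apow ((n : ℤ) + 1) ++ bpow ((n : ℤ) + 1)) ∨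
           (∃ n k : ℕ, 1 ≤ k ∧ k ≤ n ∧ z = (n : ℤ) ^ 2 + (k : ℤ) ∧
              Sz = apow (k : ℤ) ++ bpow 1 ++ apow ((n : ℤ) - (k : ℤ)) ++ bpow (n : ℤ)) ∨
           (∃ n k : ℕ, 1 ≤ k ∧ k ≤ n ∧ z = (n : ℤ) ^ 2 + (n : ℤ) + (k : ℤ) ∧
              Sz = apow (k : ℤ) ++ bpow 1 ++ apow ((n : ℤ) + 1 - (k : ℤ)) ++ bpow (n : ℤ)))
    (x' y' : ℤ) (hrep : evalX Sz = hElt x' y' z) :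
    evalX (bpow (y - y') ++ Sz ++ apow (x - x')) = hElt x y z ∧
    IsGeodesicX (bpow (y - y') ++ Sz ++ apow (x - x')) := by
  have hxz : x ^ 2 < z := by
    exact_mod_cast (Real.lt_sqrt (by exact_mod_cast hx)).mp hsqrt
  have hcoord := congrArg toH3 hrep
  rw [toH3_hElt] at hcoord
  rcases hSz with ⟨n, rfl, rfl⟩ | ⟨n, k, hk1, hkn, rfl, rfl⟩ | ⟨n, k, hk1, hkn, rfl, rfl⟩ <;>
    simp only [evalX_append, map_mul, toH3_evalX_apow, toH3_evalX_bpow, H3.mul_def,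
      H3.mk.injEq] at hcoord <;>
    obtain ⟨hx', hy', -⟩ := hcoord <;>
    have hxn : x ≤ n := by nlinarith
  all_goals
    refine isGeodesicX_bpow_append_append_apow hx hy0 hrep ?_ (by omega) (by omega) (by nlinarith)
    simp only [List.length_append, length_apow, length_bpow]
    omega

/-- Suppose `x, z ≥ 0`, `0 ≤ y ≤ x` and `x < √z`. Let `S_z` be the word
`a^{n+1} b^{n+1}` if `z = (n+1)²`; `a^k b a^{n−k} b^n` if `z = n² + k` with `1 ≤ k ≤ n`;
and `a^k b a^{n+1−k} b^n` if `z = n² + n + k` with `1 ≤ k ≤ n`. If `S_z` represents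
`(x',y',z) ∈ 𝓗`, then `b^{y−y'} S_z a^{x−x'}` is a geodesic representative of `(x,y,z)`. -/
theorem geodesic_case_I1 (x y z : ℤ) (hx : 0 ≤ x) (hz : 0 ≤ z) (hy0 : 0 ≤ y) (hyx : y ≤ x)
    (hsqrt : (x : ℝ) < Real.sqrt z)
    (Sz : List XLetter)
    (hSz : (∃ n : ℕ, z = ((n : ℤ) + 1) ^ 2 ∧ Sz = apow ((n : ℤ) + 1) ++ bpow ((n : ℤ) + 1)) ∨
           (∃ n k : ℕ, 1 ≤ k ∧ k ≤ n ∧ z = (n : ℤ) ^ 2 + (k : ℤ) ∧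
              Sz = apow (k : ℤ) ++ bpow 1 ++ apow ((n : ℤ) - (k : ℤ)) ++ bpow (n : ℤ)) ∨
           (∃ n k : ℕ, 1 ≤ k ∧ k ≤ n ∧ z = (n : ℤ) ^ 2 + (n : ℤ) + (k : ℤ) ∧
              Sz = apow (k : ℤ) ++ bpow 1 ++ apow ((n : ℤ) + 1 - (k : ℤ)) ++ bpow (n : ℤ)))
    (x' y' : ℤ) (hrep : evalX Sz = hElt x' y' z) :
    evalX (bpow (y - y') ++ Sz ++ apow (x - x')) = hElt x y z ∧
    IsGeodesicX (bpow (y - y') ++ Sz ++ apow (x - x')) :=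
  geodesic_case_I1_general x y z hx hy0 hyx hsqrt Sz hSz x' y' hrep
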